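/- (Arhangel'skii–Shapirovskii) For any Hausdorff space X, |X| ≤ 2^{ψ(X)·t(X)·L(X)}. -/

import Mathlib

open Cardinal Set

universe u

/-- Every open cover (by opens of `X`) of the subset `Y` has a subcover of size `≤ κ`. -/
def LindelofLE {X : Type u} [TopologicalSpace X] (Y : Set X) (κ : Cardinal.{u}) : Prop :=
  ∀ U : Set (Set X), (∀ u ∈ U, IsOpen u) → Y ⊆ ⋃₀ U →
    ∃ V ⊆ U, #V ≤ κ ∧ Y ⊆ ⋃₀ V

/-- The tightness of `X` is at most `κ`. -/
def TightnessLE (X : Type u) [TopologicalSpace X] (κ : Cardinal.{u}) : Prop :=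
  ∀ (A : Set X) (x : X), x ∈ closure A → ∃ B ⊆ A, #B ≤ κ ∧ x ∈ closure B

/-!
The closing-off argument of Pol and Šapirovskiĭ. By Hausdorffness and the Lindelöf property,
`ψ(X) ≤ κ` improves to closed pseudocharacter `≤ κ`: each `x` has `κ` open neighbourhoods `W x`
whose closures meet in `{x}`. With `t(X) ≤ κ` this gives `|cl B| ≤ 2^κ` for `|B| ≤ κ`. Build
`G` with `|G| ≤ 2^κ` that, with every `B ⊆ G` of size `≤ κ`, contains `cl B` and a point outside
every non-covering union of `κ` sets from `⋃_{z ∈ B} W z`. By tightness `G` is closed, hence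
Lindelöf. If `x ∉ G`, the sets `w ∈ W y` (`y ∈ G`) with `x ∉ cl w` cover `G`; a subcover of size
`κ` then misses `x` but not `G`, contradicting the choice of `G`.
-/

namespace Cardinal

theorem two_power_power_self {κ : Cardinal.{u}} (hκ : ℵ₀ ≤ κ) :
    ((2 : Cardinal) ^ κ) ^ κ = 2 ^ κ := by
  rw [← power_mul, mul_eq_self hκ]

theorem mk_iUnion_le_of_le {α ι : Type u} {f : ι → Set α} {c : Cardinal.{u}} (hc : ℵ₀ ≤ c)
    (hι : #ι ≤ c) (hf : ∀ i, #(f i) ≤ c) : #(⋃ i, f i) ≤ c :=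
  (mk_iUnion_le f).trans (mul_le_of_le hc hι (ciSup_le' hf))

theorem mk_bounded_subset_le_of_power_le {α : Type u} {s : Set α} {κ c : Cardinal.{u}}
    (hc : ℵ₀ ≤ c) (hpow : c ^ κ ≤ c) (hs : #s ≤ c) : #{t : Set α // t ⊆ s ∧ #t ≤ κ} ≤ c :=
  (mk_bounded_subset_le s κ).trans ((power_le_power_right (max_le hs hc)).trans hpow)

end Cardinal

section ClosingOff

variable {α : Type u} (κ : Cardinal.{u}) (F : Set α → Set α)

noncomputable def closingOffStage (o : Ordinal.{u}) : Set α :=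
  ⋃ B : {B : Set α // B ⊆ ⋃ o' < o, closingOffStage o' ∧ #B ≤ κ}, F B.1
termination_by o

variable {κ F}

theorem mk_closingOffStage_le {c : Cardinal.{u}} (hc : ℵ₀ ≤ c) (hpow : c ^ κ ≤ c)
    (hF : ∀ B : Set α, #B ≤ κ → #(F B) ≤ c) (o : Ordinal.{u}) (ho : o.card ≤ c) :
    #(closingOffStage κ F o) ≤ c := by
  induction o using WellFoundedLT.induction with
  | _ o ih =>
    have hprev : #(⋃ o' < o, closingOffStage κ F o') ≤ c :=
      mk_biUnion_le_of_le ho hc _ fun o' h => ih o' h ((Ordinal.card_le_card h.le).trans ho)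
    rw [closingOffStage]
    exact mk_iUnion_le_of_le hc (mk_bounded_subset_le_of_power_le hc hpow hprev)
      fun B => hF B.1 B.2.2

theorem exists_closed_under {c : Cardinal.{u}} (hκ : ℵ₀ ≤ κ) (hκc : κ < c) (hpow : c ^ κ ≤ c)
    (hF : ∀ B : Set α, #B ≤ κ → #(F B) ≤ c) :
    ∃ G : Set α, #G ≤ c ∧ ∀ B ⊆ G, #B ≤ κ → F B ⊆ G := by
  have hc : ℵ₀ ≤ c := hκ.trans hκc.le
  refine ⟨⋃ o < (Order.succ κ).ord, closingOffStage κ F o, ?_, fun B hBG hB => ?_⟩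
  · refine mk_biUnion_le_of_le (by rw [card_ord]; exact Order.succ_le_of_lt hκc) hc _
      fun o ho => mk_closingOffStage_le hc hpow hF o ?_
    exact (Order.lt_succ_iff.1 (lt_ord.1 ho)).trans hκc.le
  choose o ho hbo using fun b : B => mem_iUnion₂.1 (hBG b.2)
  have hsup : ⨆ b, o b + 1 < (Order.succ κ).ord := by
    refine Ordinal.iSup_add_one_lt_of_lt_cof ?_ ho
    rw [(isRegular_succ hκ).cof_ord]
    exact hB.trans_lt (Order.lt_succ κ)
  have hBsub : B ⊆ ⋃ o' < ⨆ b, o b + 1, closingOffStage κ F o' := fun b hb =>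
    mem_iUnion₂.2 ⟨o ⟨b, hb⟩, (Order.lt_add_one_iff.2 le_rfl).trans_le
      (Ordinal.le_iSup (fun b => o b + 1) ⟨b, hb⟩), hbo ⟨b, hb⟩⟩
  refine Subset.trans ?_ (subset_iUnion₂ (s := fun o _ => closingOffStage κ F o) _ hsup)
  rw [closingOffStage]
  exact subset_iUnion (fun B' : {B' : Set α // B' ⊆ _ ∧ #B' ≤ κ} => F B'.1) ⟨B, hBsub, hB⟩

end ClosingOff

section Topology

variable {X : Type u} [TopologicalSpace X] {κ : Cardinal.{u}}

theorem LindelofLE.exists_subcover {Y : Set X} (hY : LindelofLE Y κ) {ι : Type u}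
    (f : ι → Set X) (hf : ∀ i, IsOpen (f i)) (hcov : Y ⊆ ⋃ i, f i) :
    ∃ J : Set ι, #J ≤ κ ∧ Y ⊆ ⋃ i ∈ J, f i := by
  obtain ⟨V, hVf, hV, hYV⟩ := hY (range f) (forall_mem_range.2 hf) (by rwa [sUnion_range])
  choose g hg using fun v : V => hVf v.2
  refine ⟨range g, mk_range_le.trans hV, fun y hy => ?_⟩
  obtain ⟨v, hv, hyv⟩ := hYV hy
  exact mem_iUnion₂.2 ⟨g ⟨v, hv⟩, mem_range_self _, (hg ⟨v, hv⟩).symm ▸ hyv⟩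

theorem lindelofLE_of_isClosed (hL : LindelofLE (Set.univ : Set X) κ) {F : Set X}
    (hF : IsClosed F) : LindelofLE F κ := by
  intro U hU hFU
  obtain ⟨V, hVU, hV, hXV⟩ := hL (insert Fᶜ U) (forall_mem_insert.2 ⟨hF.isOpen_compl, hU⟩)
    fun x _ => by
      by_cases hx : x ∈ F
      · exact sUnion_mono (subset_insert _ _) (hFU hx)
      · exact ⟨Fᶜ, mem_insert _ _, hx⟩
  refine ⟨V ∩ U, inter_subset_right, (mk_le_mk_of_subset inter_subset_left).trans hV,
    fun x hx => ?_⟩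
  obtain ⟨v, hv, hxv⟩ := hXV (mem_univ x)
  rcases hVU hv with rfl | hvU
  · exact absurd hx hxv
  · exact ⟨v, ⟨hv, hvU⟩, hxv⟩

theorem TightnessLE.isClosed_of_forall_closure_subset (ht : TightnessLE X κ) {G : Set X}
    (hG : ∀ B ⊆ G, #B ≤ κ → closure B ⊆ G) : IsClosed G := by
  refine isClosed_of_closure_subset fun x hx => ?_
  obtain ⟨B, hBG, hB, hxB⟩ := ht G x hx
  exact hG B hBG hB hxB

/-- A witness of closed pseudocharacter `ψ_c(x) ≤ κ`. -/
structure IsClosedPseudobase (κ : Cardinal.{u}) (x : X) (W : Set (Set X)) : Prop where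
  isOpen : ∀ w ∈ W, IsOpen w
  mem : ∀ w ∈ W, x ∈ w
  mk_le : #W ≤ κ
  biInter_closure : ⋂ w ∈ W, closure w = {x}

theorem exists_biInter_closure_subset [T2Space X] (hL : LindelofLE (Set.univ : Set X) κ) {x : X}
    {u : Set X} (hu : IsOpen u) (hxu : x ∈ u) :
    ∃ W : Set (Set X), (∀ w ∈ W, IsOpen w ∧ x ∈ w) ∧ #W ≤ κ ∧ ⋂ w ∈ W, closure w ⊆ u := by
  choose a b ha hb hxa hyb hab using fun y : ↥uᶜ => t2_separation (ne_of_mem_of_not_mem hxu y.2)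
  obtain ⟨J, hJ, hcov⟩ := (lindelofLE_of_isClosed hL hu.isClosed_compl).exists_subcover b hb
    fun y hy => mem_iUnion.2 ⟨⟨y, hy⟩, hyb _⟩
  refine ⟨a '' J, forall_mem_image.2 fun y _ => ⟨ha y, hxa y⟩, mk_image_le.trans hJ, ?_⟩
  intro z hz
  by_contra hzu
  obtain ⟨y, hyJ, hzy⟩ := mem_iUnion₂.1 (hcov hzu)
  -- `closure (a y)` misses the open set `b y`, which is disjoint from `a y`
  exact (hab y).closure_left (hb y) |>.notMem_of_mem_left
    (mem_iInter₂.1 hz _ (mem_image_of_mem a hyJ)) hzy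

theorem exists_isClosedPseudobase [T2Space X] (hκ : ℵ₀ ≤ κ) (hL : LindelofLE (Set.univ : Set X) κ)
    {x : X} {U : Set (Set X)} (hUo : ∀ u ∈ U, IsOpen u) (hU : #U ≤ κ) (hUx : ⋂₀ U = {x}) :
    ∃ W, IsClosedPseudobase κ x W := by
  have hxU : x ∈ ⋂₀ U := hUx ▸ mem_singleton x
  choose W hW hWκ hWu using fun u : U => exists_biInter_closure_subset hL (hUo u u.2) (hxU u u.2)
  refine ⟨⋃ u, W u, fun w hw => ?_, fun w hw => ?_, ?_, ?_⟩
  · obtain ⟨u, hu⟩ := mem_iUnion.1 hw; exact (hW u w hu).1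
  · obtain ⟨u, hu⟩ := mem_iUnion.1 hw; exact (hW u w hu).2
  · exact mk_iUnion_le_of_le hκ hU hWκ
  refine Subset.antisymm (fun z hz => hUx ▸ fun u hu => hWu ⟨u, hu⟩ ?_) ?_
  · exact mem_iInter₂.2 fun w hw => mem_iInter₂.1 hz w (mem_iUnion.2 ⟨_, hw⟩)
  · rintro z rfl
    exact mem_iInter₂.2 fun w hw => subset_closure <| by
      obtain ⟨u, hu⟩ := mem_iUnion.1 hw; exact (hW u w hu).2

theorem mk_closure_le_two_power (hκ : ℵ₀ ≤ κ) (ht : TightnessLE X κ) {W : X → Set (Set X)}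
    (hW : ∀ x, IsClosedPseudobase κ x (W x)) {B : Set X} (hB : #B ≤ κ) :
    #(closure B) ≤ 2 ^ κ := by
  choose C hCB _ hxC using fun x : closure B => ht B x x.2
  -- `x` is determined by the traces `w ∩ C x` of its neighbourhoods `w ∈ W x`
  let trace (x : closure B) : {𝒯 : Set (Set X) // 𝒯 ⊆ 𝒫 B ∧ #𝒯 ≤ κ} :=
    ⟨(· ∩ C x) '' W x, forall_mem_image.2 fun _ _ => inter_subset_right.trans (hCB x),
      mk_image_le.trans (hW x).mk_le⟩
  have htrace : Function.Injective trace := by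
    intro x y hxy
    have hx : (x : X) ∈ ⋂ w ∈ W y, closure w := by
      refine mem_iInter₂.2 fun w hw => ?_
      have hmem : w ∩ C y ∈ (· ∩ C x) '' W x := by
        rw [show (· ∩ C x) '' W x = (· ∩ C y) '' W y from congrArg Subtype.val hxy]
        exact mem_image_of_mem _ hw
      obtain ⟨w', hw', heq : w' ∩ C x = w ∩ C y⟩ := hmem
      have hxw' : (x : X) ∈ closure (w' ∩ C x) :=
        (hW x).isOpen w' hw' |>.inter_closure ⟨(hW x).mem w' hw', hxC x⟩
      rw [heq] at hxw'
      exact closure_mono inter_subset_left hxw'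
    rw [(hW y).biInter_closure] at hx
    exact Subtype.ext hx
  calc #(closure B) ≤ #{𝒯 : Set (Set X) // 𝒯 ⊆ 𝒫 B ∧ #𝒯 ≤ κ} := mk_le_of_injective htrace
    _ ≤ 2 ^ κ := by
      refine mk_bounded_subset_le_of_power_le (hκ.trans (cantor κ).le)
        (two_power_power_self hκ).le ?_
      rw [mk_powerset]
      exact power_le_power_left two_ne_zero hB

theorem eq_univ_of_forall_subset_sUnion (hL : LindelofLE (Set.univ : Set X) κ)
    {W : X → Set (Set X)} (hW : ∀ x, IsClosedPseudobase κ x (W x)) {G : Set X}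
    (hG : IsClosed G)
    (hcov : ∀ B ⊆ G, #B ≤ κ → ∀ 𝒰 ⊆ ⋃ z ∈ B, W z, #𝒰 ≤ κ → G ⊆ ⋃₀ 𝒰 → ⋃₀ 𝒰 = Set.univ) :
    G = Set.univ := by
  by_contra hne
  obtain ⟨x, hx⟩ := (ne_univ_iff_exists_notMem G).1 hne
  have hsep (y : G) : ∃ w ∈ W y, x ∉ closure w := by
    by_contra! h
    have : x ∈ ⋂ w ∈ W y, closure w := mem_iInter₂.2 h
    rw [(hW y).biInter_closure, mem_singleton_iff] at this
    exact hx (this ▸ y.2)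
  choose w hwW hxw using hsep
  obtain ⟨J, hJ, hGJ⟩ := (lindelofLE_of_isClosed hL hG).exists_subcover w
    (fun y => (hW y).isOpen _ (hwW y))
    fun y hy => mem_iUnion.2 ⟨⟨y, hy⟩, (hW y).mem _ (hwW ⟨y, hy⟩)⟩
  have hX := hcov (Subtype.val '' J) (Subtype.coe_image_subset G J) (mk_image_le.trans hJ)
    (w '' J)
    (forall_mem_image.2 fun y hy => mem_biUnion (mem_image_of_mem _ hy) (hwW y))
    (mk_image_le.trans hJ) (by rwa [sUnion_image])
  obtain ⟨_, ⟨y, -, rfl⟩, hxy⟩ := hX ▸ mem_univ x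
  exact hxw y (subset_closure hxy)

noncomputable def arhangelskiiStep (κ : Cardinal.{u}) (W : X → Set (Set X)) (B : Set X) : Set X :=
  closure B ∪ range fun 𝒰 : {𝒰 : Set (Set X) // 𝒰 ⊆ ⋃ z ∈ B, W z ∧ #𝒰 ≤ κ ∧ (⋃₀ 𝒰)ᶜ.Nonempty} =>
    𝒰.2.2.2.some

theorem mk_arhangelskiiStep_le (hκ : ℵ₀ ≤ κ) (ht : TightnessLE X κ) {W : X → Set (Set X)}
    (hW : ∀ x, IsClosedPseudobase κ x (W x)) {B : Set X} (hB : #B ≤ κ) :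
    #(arhangelskiiStep κ W B) ≤ 2 ^ κ := by
  have h2κ : ℵ₀ ≤ 2 ^ κ := hκ.trans (cantor κ).le
  have hWB : #(⋃ z ∈ B, W z) ≤ 2 ^ κ :=
    (mk_biUnion_le _ _).trans <| (mul_le_of_le hκ hB (ciSup_le' fun z : B => (hW z).mk_le)).trans
      (cantor κ).le
  refine (mk_union_le _ _).trans (add_le_of_le h2κ (mk_closure_le_two_power hκ ht hW hB) ?_)
  refine mk_range_le.trans <| (mk_subtype_mono ?_).trans
    (mk_bounded_subset_le_of_power_le h2κ (two_power_power_self hκ).le hWB)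
  exact fun 𝒰 h => ⟨h.1, h.2.1⟩

theorem sUnion_eq_univ_of_arhangelskiiStep_subset {W : X → Set (Set X)} {B : Set X}
    {𝒰 : Set (Set X)} (h𝒰B : 𝒰 ⊆ ⋃ z ∈ B, W z) (h𝒰 : #𝒰 ≤ κ)
    (hstep : arhangelskiiStep κ W B ⊆ ⋃₀ 𝒰) : ⋃₀ 𝒰 = Set.univ := by
  by_contra hne
  have hcompl : (⋃₀ 𝒰)ᶜ.Nonempty := nonempty_compl.2 hne
  exact hcompl.some_mem (hstep (Or.inr ⟨⟨𝒰, h𝒰B, h𝒰, hcompl⟩, rfl⟩))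

end Topology

/-- (Arhangel'skii–Shapirovskii) For a Hausdorff `X`: `|X| ≤ 2^{ψ(X)·t(X)·L(X)}`,
stated as: for every infinite `κ` bounding `ψ(X)`, `t(X)` and `L(X)`, `|X| ≤ 2^κ`. -/
theorem statement6 {X : Type u} [TopologicalSpace X] [T2Space X] {κ : Cardinal.{u}}
    (hκ : ℵ₀ ≤ κ)
    (hψ : ∀ x : X, ∃ U : Set (Set X), (∀ u ∈ U, IsOpen u) ∧ #U ≤ κ ∧ ⋂₀ U = {x})
    (ht : TightnessLE X κ)
    (hL : LindelofLE (Set.univ : Set X) κ) :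
    #X ≤ 2 ^ κ := by
  have hW (x : X) : ∃ W, IsClosedPseudobase κ x W :=
    let ⟨_, hUo, hU, hUx⟩ := hψ x
    exists_isClosedPseudobase hκ hL hUo hU hUx
  choose W hW using hW
  obtain ⟨G, hG, hGstep⟩ := exists_closed_under hκ (cantor κ) (two_power_power_self hκ).le
    fun B => mk_arhangelskiiStep_le hκ ht hW (B := B)
  have hG_closed : IsClosed G := ht.isClosed_of_forall_closure_subset fun B hBG hB =>
    subset_union_left.trans (hGstep B hBG hB)
  have hG_univ : G = Set.univ := eq_univ_of_forall_subset_sUnion hL hW hG_closed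
    fun B hBG hB _ h𝒰B h𝒰 hG𝒰 =>
      sUnion_eq_univ_of_arhangelskiiStep_subset h𝒰B h𝒰 ((hGstep B hBG hB).trans hG𝒰)
  rwa [hG_univ, mk_univ] at hG
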